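/- arXiv:2308.06655 — 3 statements merged into one kernel-verified Lean document; each statement's English description precedes it below -/
import Mathlib

section
/- Let φ(x) = e^{-|x|} and define the linear operator L v = (1 - φ²) v' + φ φ' v (acting on distributions on ℝ). Then L φ = φ' and L φ' = φ. -/
open MeasureTheory Real Set Filter

/-- `φ(x) = e^{-|x|}`. -/
noncomputable def phi (x : ℝ) : ℝ := Real.exp (-|x|)

/-- The a.e. derivative `φ'(x) = -sgn(x) e^{-|x|}`. -/
noncomputable def phi' (x : ℝ) : ℝ := -Real.sign x * Real.exp (-|x|)

lemma continuous_phi : Continuous phi := Real.continuous_exp.comp continuous_abs.neg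

lemma phi_pos (x : ℝ) : 0 < phi x := Real.exp_pos _

lemma phi_le_one (x : ℝ) : phi x ≤ 1 := by
  rw [phi, ← Real.exp_zero]
  exact Real.exp_le_exp.mpr (neg_nonpos.mpr (abs_nonneg x))

lemma abs_sign_le (x : ℝ) : |Real.sign x| ≤ 1 := by
  rcases lt_trichotomy x 0 with h | h | h
  · simp [Real.sign_of_neg h]
  · simp [h, Real.sign_zero]
  · simp [Real.sign_of_pos h]

lemma abs_phi_le_one (x : ℝ) : |phi x| ≤ 1 := by
  rw [abs_of_pos (phi_pos x)]; exact phi_le_one x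

lemma abs_phi'_le_one (x : ℝ) : |phi' x| ≤ 1 := by
  rw [phi', abs_mul, abs_neg]
  calc |Real.sign x| * |Real.exp (-|x|)| ≤ 1 * 1 := by
        refine mul_le_mul (abs_sign_le x) ?_ (abs_nonneg _) zero_le_one
        rw [abs_of_pos (Real.exp_pos _)]
        exact phi_le_one x
    _ = 1 := one_mul 1

lemma measurable_rsign : Measurable Real.sign := by
  unfold Real.sign
  exact Measurable.ite measurableSet_Iio measurable_const
    (Measurable.ite measurableSet_Ioi measurable_const measurable_const)

lemma measurable_phi' : Measurable phi' :=
  measurable_rsign.neg.mul continuous_phi.measurable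

lemma rsign_mul_self {x : ℝ} (hx : x ≠ 0) : Real.sign x * Real.sign x = 1 := by
  rcases hx.lt_or_gt with h | h
  · rw [Real.sign_of_neg h]; ring
  · rw [Real.sign_of_pos h]; ring

lemma phi'_sq {x : ℝ} (hx : x ≠ 0) : phi' x ^ 2 = phi x ^ 2 := by
  have := rsign_mul_self hx
  simp only [phi', phi]
  nlinarith [Real.exp_pos (-|x|)]

lemma hasDerivAt_phi {x : ℝ} (hx : x ≠ 0) : HasDerivAt phi (phi' x) x := by
  rcases hx.lt_or_gt with h | h
  · have hev : phi =ᶠ[nhds x] fun y => Real.exp y := by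
      filter_upwards [eventually_lt_nhds h] with y hy
      simp [phi, abs_of_neg hy]
    have : HasDerivAt (fun y => Real.exp y) (Real.exp x) x := Real.hasDerivAt_exp x
    refine this.congr_of_eventuallyEq hev |>.congr_deriv ?_
    simp [phi', Real.sign_of_neg h, abs_of_neg h]
  · have hev : phi =ᶠ[nhds x] fun y => Real.exp (-y) := by
      filter_upwards [eventually_gt_nhds h] with y hy
      simp [phi, abs_of_pos hy]
    have : HasDerivAt (fun y => Real.exp (-y)) (-Real.exp (-x)) x := by
      exact ((Real.hasDerivAt_exp (-x)).comp x (hasDerivAt_neg x)).congr_deriv (by simp)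
    refine this.congr_of_eventuallyEq hev |>.congr_deriv ?_
    simp [phi', Real.sign_of_pos h, abs_of_pos h]

lemma hasDerivAt_phi' {x : ℝ} (hx : x ≠ 0) : HasDerivAt phi' (phi x) x := by
  have hs : ∀ᶠ y in nhds x, Real.sign y = Real.sign x := by
    rcases hx.lt_or_gt with h | h
    · filter_upwards [eventually_lt_nhds h] with y hy
      rw [Real.sign_of_neg hy, Real.sign_of_neg h]
    · filter_upwards [eventually_gt_nhds h] with y hy
      rw [Real.sign_of_pos hy, Real.sign_of_pos h]
  have hev : phi' =ᶠ[nhds x] fun y => -Real.sign x * phi y := by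
    filter_upwards [hs] with y hy
    simp [phi', phi, hy]
  have hd : HasDerivAt (fun y => -Real.sign x * phi y)
      (-Real.sign x * phi' x) x := (hasDerivAt_phi hx).const_mul _
  refine hd.congr_of_eventuallyEq hev |>.congr_deriv ?_
  have h2 := rsign_mul_self hx
  simp only [phi', phi]
  nlinarith [Real.exp_pos (-|x|)]

/-- integration by parts for a function differentiable off `0` vanishing at `0`. -/
lemma ibp (F f ψ : ℝ → ℝ) (hFc : Continuous F) (hF0 : F 0 = 0)
    (hd : ∀ x : ℝ, x ≠ 0 → HasDerivAt F (f x) x)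
    (hfi : ∀ a b : ℝ, IntervalIntegrable f volume a b)
    (hψ : ContDiff ℝ (⊤ : ℕ∞) ψ) (hsupp : HasCompactSupport ψ) :
    ∫ x, F x * deriv ψ x = -∫ x, f x * ψ x := by
  obtain ⟨R, hR0, hRsub⟩ := hsupp.isBounded.subset_ball_lt 0 0
  rw [Real.ball_eq_Ioo, zero_sub, zero_add] at hRsub
  have hψc : Continuous ψ := hψ.continuous
  have hψ'c : Continuous (deriv ψ) := hψ.continuous_deriv (by simp)
  have hψ0 : ∀ x, x ∉ Set.Ioo (-R) R → ψ x = 0 := fun x hx =>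
    image_eq_zero_of_notMem_tsupport (fun h => hx (hRsub h))
  have hψ'0 : ∀ x, x ∉ Set.Ioo (-R) R → deriv ψ x = 0 := fun x hx => by
    by_contra h
    exact hx (hRsub (support_deriv_subset (by simpa using h)))
  have hder : ∀ x ∈ Set.Ioo (-R) R, x ≠ 0 →
      HasDerivAt (fun y => F y * ψ y) (f x * ψ x + F x * deriv ψ x) x := fun x _ hx =>
    (hd x hx).mul (hψ.differentiable (by simp) x).hasDerivAt
  have hint : ∀ a b : ℝ, IntervalIntegrable (fun x => f x * ψ x + F x * deriv ψ x) volume a b :=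
    fun a b => ((hfi a b).mul_continuousOn hψc.continuousOn).add
      ((hFc.mul hψ'c).intervalIntegrable a b)
  have h1 : ∫ x in (-R)..0, (f x * ψ x + F x * deriv ψ x) = 0 := by
    rw [intervalIntegral.integral_eq_sub_of_hasDerivAt_of_le (by linarith)
      ((hFc.mul hψc).continuousOn)
      (fun x hx => hder x ⟨hx.1, by linarith [hx.2]⟩ (ne_of_lt hx.2)) (hint _ _)]
    rw [Pi.mul_apply, Pi.mul_apply, hF0, hψ0 (-R) (by simp), zero_mul, mul_zero, sub_zero]
  have h2 : ∫ x in (0:ℝ)..R, (f x * ψ x + F x * deriv ψ x) = 0 := by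
    rw [intervalIntegral.integral_eq_sub_of_hasDerivAt_of_le (by linarith)
      ((hFc.mul hψc).continuousOn)
      (fun x hx => hder x ⟨by linarith [hx.1], hx.2⟩ (ne_of_gt hx.1)) (hint _ _)]
    rw [Pi.mul_apply, Pi.mul_apply, hF0, hψ0 R (by simp), mul_zero, zero_mul, sub_zero]
  have h3 : ∫ x in (-R)..R, (f x * ψ x + F x * deriv ψ x) = 0 := by
    rw [← intervalIntegral.integral_add_adjacent_intervals (hint (-R) 0) (hint 0 R), h1, h2,
      add_zero]
  have h4 : ∫ x in (-R)..R, (f x * ψ x + F x * deriv ψ x)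
      = (∫ x in (-R)..R, f x * ψ x) + ∫ x in (-R)..R, F x * deriv ψ x :=
    intervalIntegral.integral_add ((hfi _ _).mul_continuousOn hψc.continuousOn)
      ((hFc.mul hψ'c).intervalIntegrable _ _)
  have h5 : ∫ x in (-R)..R, f x * ψ x = ∫ x, f x * ψ x := by
    apply intervalIntegral.integral_eq_integral_of_support_subset
    intro x hx
    rcases (by by_contra h; exact hx (by simp [hψ0 x h]) : x ∈ Set.Ioo (-R) R) with ⟨h1', h2'⟩
    exact ⟨h1', le_of_lt h2'⟩
  have h6 : ∫ x in (-R)..R, F x * deriv ψ x = ∫ x, F x * deriv ψ x := by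
    apply intervalIntegral.integral_eq_integral_of_support_subset
    intro x hx
    rcases (by by_contra h; exact hx (by simp [hψ'0 x h]) : x ∈ Set.Ioo (-R) R) with ⟨h1', h2'⟩
    exact ⟨h1', le_of_lt h2'⟩
  rw [h4, h5, h6] at h3
  linarith

lemma intervalIntegrable_of_bdd (g : ℝ → ℝ) (hg : Measurable g) (C : ℝ)
    (hC : ∀ x, |g x| ≤ C) (a b : ℝ) : IntervalIntegrable g volume a b := by
  rw [intervalIntegrable_iff]
  refine Integrable.mono' (g := fun _ => C) ?_ hg.aestronglyMeasurable.restrict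
    (ae_of_all _ fun x => by simpa using hC x)
  exact (integrableOn_const_iff).mpr (Or.inr measure_Ioc_lt_top)

lemma integrable_bdd_mul (g ψ : ℝ → ℝ) (hg : Measurable g) (C : ℝ) (hC : ∀ x, |g x| ≤ C)
    (hψc : Continuous ψ) (hsupp : HasCompactSupport ψ) :
    Integrable (fun x => g x * ψ x) := by
  have hψi : Integrable ψ := hψc.integrable_of_hasCompactSupport hsupp
  refine Integrable.mono' (g := fun x => C * |ψ x|) (hψi.abs.const_mul C)
    (hg.mul hψc.measurable).aestronglyMeasurable (ae_of_all _ fun x => ?_)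
  rw [Real.norm_eq_abs, abs_mul]
  exact mul_le_mul_of_nonneg_right (hC x) (abs_nonneg _)

noncomputable def Gf (x : ℝ) : ℝ := phi' x * (1 - phi x ^ 2)

lemma hasDerivAt_Gf {x : ℝ} (hx : x ≠ 0) :
    HasDerivAt Gf (phi x - 3 * phi x ^ 3) x := by
  have h := (hasDerivAt_phi' hx).mul
    ((hasDerivAt_const x (1 : ℝ)).sub ((hasDerivAt_phi hx).pow 2))
  have hsq := phi'_sq hx
  refine h.congr_deriv ?_
  norm_num
  nlinarith [phi_pos x, abs_phi'_le_one x]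

lemma continuous_Gf : Continuous Gf := by
  rw [continuous_iff_continuousAt]
  intro x
  rcases eq_or_ne x 0 with rfl | hx
  · have hG0 : Gf 0 = 0 := by simp [Gf, phi', Real.sign_zero]
    rw [ContinuousAt, hG0]
    have hb : ∀ y : ℝ, ‖Gf y‖ ≤ 2 * |y| := by
      intro y
      have he : phi y ^ 2 = Real.exp (-(2 * |y|)) := by
        rw [phi, sq, ← Real.exp_add]; ring_nf
      have h1 : 1 - phi y ^ 2 ≤ 2 * |y| := by
        rw [he]; nlinarith [Real.add_one_le_exp (-(2 * |y|))]
      have h2 : 0 ≤ 1 - phi y ^ 2 := by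
        nlinarith [phi_pos y, phi_le_one y]
      rw [Real.norm_eq_abs, Gf, abs_mul, abs_of_nonneg h2]
      calc |phi' y| * (1 - phi y ^ 2) ≤ 1 * (2 * |y|) :=
            mul_le_mul (abs_phi'_le_one y) h1 h2 zero_le_one
        _ = 2 * |y| := one_mul _
    have ht : Tendsto (fun y : ℝ => 2 * |y|) (nhds 0) (nhds 0) := by
      have := (continuous_const.mul continuous_abs : Continuous fun y : ℝ => 2 * |y|).tendsto (0 : ℝ)
      convert this using 2 <;> simp
    exact squeeze_zero_norm hb ht
  · exact (hasDerivAt_Gf hx).continuousAt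

/-- For `L v = (1-φ²) v' + φ φ' v` acting on distributions, `L φ = φ'` and `L φ' = φ`.
Distributionally, `⟨(1-φ²) v', ψ⟩ = -∫ v ((1-φ²)ψ)'` where
`((1-φ²)ψ)' = -2φφ'ψ + (1-φ²)ψ'` a.e. -/
theorem L_phi_eq_phi'_and_L_phi'_eq_phi :
    ∀ ψ : ℝ → ℝ, ContDiff ℝ (⊤ : ℕ∞) ψ → HasCompactSupport ψ →
      (-(∫ x : ℝ, phi x * (-2 * phi x * phi' x * ψ x + (1 - phi x ^ 2) * deriv ψ x))
          + ∫ x : ℝ, phi x * phi' x * phi x * ψ x = ∫ x : ℝ, phi' x * ψ x)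
      ∧
      (-(∫ x : ℝ, phi' x * (-2 * phi x * phi' x * ψ x + (1 - phi x ^ 2) * deriv ψ x))
          + ∫ x : ℝ, phi x * phi' x * phi' x * ψ x = ∫ x : ℝ, phi x * ψ x) := by
  intro ψ hψ hsupp
  have hψc : Continuous ψ := hψ.continuous
  have h0 : ∀ᵐ x : ℝ, x ≠ 0 := by
    rw [ae_iff]
    have h : {x : ℝ | ¬x ≠ 0} = {0} := by ext y; simp
    rw [h]
    exact measure_singleton 0
  -- basic integrabilities
  have int_pp'ψ : Integrable (fun x => phi x ^ 2 * phi' x * ψ x) := by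
    refine integrable_bdd_mul _ _ ((continuous_phi.pow 2).measurable.mul measurable_phi') 1
      (fun x => ?_) hψc hsupp
    rw [abs_mul, abs_pow]
    nlinarith [abs_phi_le_one x, abs_phi'_le_one x, abs_nonneg (phi x), abs_nonneg (phi' x)]
  have int_p'ψ : Integrable (fun x => phi' x * ψ x) :=
    integrable_bdd_mul _ _ measurable_phi' 1 abs_phi'_le_one hψc hsupp
  have int_p3ψ : Integrable (fun x => phi x ^ 3 * ψ x) := by
    refine integrable_bdd_mul _ _ (continuous_phi.pow 3).measurable 1 (fun x => ?_) hψc hsupp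
    rw [abs_pow]
    calc |phi x| ^ 3 ≤ 1 ^ 3 := pow_le_pow_left₀ (abs_nonneg _) (abs_phi_le_one x) 3
      _ = 1 := one_pow 3
  have int_pψ : Integrable (fun x => phi x * ψ x) :=
    integrable_bdd_mul _ _ continuous_phi.measurable 1 abs_phi_le_one hψc hsupp
  constructor
  · -- Part 1
    have hibp1 : ∫ x, (phi x - phi x ^ 3) * deriv ψ x
        = -∫ x, (phi' x - 3 * phi x ^ 2 * phi' x) * ψ x := by
      refine ibp _ _ ψ (continuous_phi.sub (continuous_phi.pow 3)) (by simp [phi])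
        (fun x hx => ?_) (fun a b => ?_) hψ hsupp
      · have h := (hasDerivAt_phi hx).sub ((hasDerivAt_phi hx).pow 3)
        exact h.congr_deriv (by norm_num)
      · refine intervalIntegrable_of_bdd _
          (measurable_phi'.sub ((measurable_const.mul
            (continuous_phi.pow 2).measurable).mul measurable_phi')) 4 (fun x => ?_) a b
        have e : phi' x - 3 * phi x ^ 2 * phi' x = phi' x * (1 - 3 * phi x ^ 2) := by ring
        show |phi' x - 3 * phi x ^ 2 * phi' x| ≤ 4
        rw [e, abs_mul]
        have h2 : |1 - 3 * phi x ^ 2| ≤ 4 := by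
          rw [abs_le]
          constructor <;> nlinarith [phi_pos x, phi_le_one x]
        calc |phi' x| * |1 - 3 * phi x ^ 2| ≤ 1 * 4 :=
              mul_le_mul (abs_phi'_le_one x) h2 (abs_nonneg _) zero_le_one
          _ = 4 := one_mul 4
    have e1 : (fun x => phi x * (-2 * phi x * phi' x * ψ x + (1 - phi x ^ 2) * deriv ψ x))
        = fun x => (-2) * (phi x ^ 2 * phi' x * ψ x) + (phi x - phi x ^ 3) * deriv ψ x := by
      funext x; ring
    have hint2 : Integrable (fun x => (phi x - phi x ^ 3) * deriv ψ x) := by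
      refine ((continuous_phi.sub (continuous_phi.pow 3)).mul
        (hψ.continuous_deriv (by simp))).integrable_of_hasCompactSupport ?_
      exact (hsupp.deriv).mul_left
    have hsplit : ∫ x, phi x * (-2 * phi x * phi' x * ψ x + (1 - phi x ^ 2) * deriv ψ x)
        = (-2) * (∫ x, phi x ^ 2 * phi' x * ψ x) + ∫ x, (phi x - phi x ^ 3) * deriv ψ x := by
      rw [e1, integral_add (int_pp'ψ.const_mul (-2)) hint2, integral_const_mul]
    have e2 : (fun x => (phi' x - 3 * phi x ^ 2 * phi' x) * ψ x)
        = fun x => phi' x * ψ x - 3 * (phi x ^ 2 * phi' x * ψ x) := by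
      funext x; ring
    have hsplit2 : ∫ x, (phi' x - 3 * phi x ^ 2 * phi' x) * ψ x
        = (∫ x, phi' x * ψ x) - 3 * ∫ x, phi x ^ 2 * phi' x * ψ x := by
      rw [e2, integral_sub int_p'ψ (int_pp'ψ.const_mul 3), integral_const_mul]
    have e3 : (fun x => phi x * phi' x * phi x * ψ x)
        = fun x => phi x ^ 2 * phi' x * ψ x := by
      funext x; ring
    rw [e3, hsplit, hibp1, hsplit2]
    ring
  · -- Part 2
    have hibp2 : ∫ x, Gf x * deriv ψ x = -∫ x, (phi x - 3 * phi x ^ 3) * ψ x := by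
      refine ibp _ _ ψ continuous_Gf (by simp [Gf, phi', Real.sign_zero])
        (fun x hx => hasDerivAt_Gf hx)
        (fun a b => ((continuous_phi.sub
          ((continuous_const.mul (continuous_phi.pow 3)))).intervalIntegrable a b)) hψ hsupp
    have hintG : Integrable (fun x => Gf x * deriv ψ x) := by
      refine (continuous_Gf.mul (hψ.continuous_deriv (by simp))).integrable_of_hasCompactSupport ?_
      exact (hsupp.deriv).mul_left
    have hsplitA : ∫ x, phi' x * (-2 * phi x * phi' x * ψ x + (1 - phi x ^ 2) * deriv ψ x)
        = (-2) * (∫ x, phi x ^ 3 * ψ x) + ∫ x, Gf x * deriv ψ x := by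
      rw [← integral_const_mul, ← integral_add (int_p3ψ.const_mul (-2)) hintG]
      apply integral_congr_ae
      filter_upwards [h0] with x hx
      have hsq := phi'_sq hx
      simp only [Gf]
      linear_combination (-2 * phi x * ψ x) * hsq
    have hsplit2 : ∫ x, (phi x - 3 * phi x ^ 3) * ψ x
        = (∫ x, phi x * ψ x) - 3 * ∫ x, phi x ^ 3 * ψ x := by
      have e2 : (fun x => (phi x - 3 * phi x ^ 3) * ψ x)
          = fun x => phi x * ψ x - 3 * (phi x ^ 3 * ψ x) := by
        funext x; ring
      rw [e2, integral_sub int_pψ (int_p3ψ.const_mul 3), integral_const_mul]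
    have e3 : ∫ x, phi x * phi' x * phi' x * ψ x = ∫ x, phi x ^ 3 * ψ x := by
      apply integral_congr_ae
      filter_upwards [h0] with x hx
      have hsq := phi'_sq hx
      linear_combination (phi x * ψ x) * hsq
    rw [e3, hsplitA, hibp2, hsplit2]
    ring
end

section
/- Let λ ∈ ℂ with 0 < Re(λ) < 2. Then the function v defined by v(ξ) = e^{λξ}(1 - e^{2ξ})^{(1-λ)/2} for ξ < 0 and v(ξ) = 0 for ξ ≥ 0 belongs to L²(ℝ) and is a nonzero eigenfunction: it satisfies (1 - φ²) v' + φ φ' v = λ v in the sense of distributions, where φ(x) = e^{-|x|}. In particular, λ is an eigenvalue of the operator L = (1-φ²)∂_ξ + φφ' on L²(ℝ). -/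
open MeasureTheory Real Set Filter

/-- The eigenfunction of `L = (1-φ²)∂_ξ + φφ'` for `0 < Re λ < 2`, extended by `0` on `ξ ≥ 0`. -/
noncomputable def eigfun (lam : ℂ) (ξ : ℝ) : ℂ :=
  if ξ < 0 then
    Complex.exp (lam * ξ) * ((1 - Real.exp (2 * ξ) : ℝ) : ℂ) ^ ((1 - lam) / 2)
  else 0

/-! ### Auxiliary lemmas -/

lemma u_pos {x : ℝ} (h : x < 0) : 0 < 1 - Real.exp (2*x) := by
  have : Real.exp (2*x) < 1 := Real.exp_lt_one_iff.2 (by linarith)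
  linarith

lemma u_le_one {x : ℝ} : 1 - Real.exp (2*x) ≤ 1 := by
  have := Real.exp_pos (2*x); linarith

lemma u_ne {x : ℝ} (h : x < 0) : ((1 - Real.exp (2*x) : ℝ) : ℂ) ≠ 0 := by
  exact_mod_cast ne_of_gt (u_pos h)

lemma key_upper (x : ℝ) : 1 - Real.exp (2*x) ≤ -2*x := by
  have := Real.add_one_le_exp (2*x); linarith

lemma c1_pos : 0 < 1 - Real.exp (-2:ℝ) := by
  have : Real.exp (-2:ℝ) < 1 := Real.exp_lt_one_iff.2 (by norm_num)
  linarith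

lemma key_lower {x : ℝ} (h1 : -1 ≤ x) (h2 : x ≤ 0) :
    (1 - Real.exp (-2)) * (-x) ≤ 1 - Real.exp (2*x) := by
  have h := convexOn_exp.2 (mem_univ (-2 : ℝ)) (mem_univ (0 : ℝ))
    (show (0:ℝ) ≤ -x by linarith) (show (0:ℝ) ≤ 1 + x by linarith) (by ring)
  simp only [smul_eq_mul, mul_zero, add_zero, Real.exp_zero, mul_one] at h
  have h' : Real.exp (2*x) ≤ -x * Real.exp (-2) + (1+x) := by
    rw [show 2*x = -x * -2 by ring]; exact h
  nlinarith

lemma measurable_master (c p : ℝ) :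
    Measurable fun x : ℝ => Real.exp (c*x) * (1 - Real.exp (2*x)) ^ p := by
  fun_prop

/-- The master integrability lemma: `e^{cx} (1-e^{2x})^p` is integrable on `(-∞, 0)`
whenever `c > 0` and `p > -1`. -/
lemma integrableOn_master {c p : ℝ} (hc : 0 < c) (hp : -1 < p) :
    IntegrableOn (fun x => Real.exp (c*x) * (1 - Real.exp (2*x)) ^ p) (Iio 0) := by
  have hmeas := measurable_master c p
  have hsplit : Iio (0:ℝ) ⊆ Iio (-1) ∪ Ico (-1) 0 := by
    intro x hx; rcases lt_or_ge x (-1) with h | h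
    · exact Or.inl h
    · exact Or.inr ⟨h, hx⟩
  have hc₁pos := c1_pos
  refine (IntegrableOn.union ?_ ?_).mono_set hsplit
  · -- tail part
    set M : ℝ := max 1 ((1 - Real.exp (-2)) ^ p) with hM
    have hexp : IntegrableOn (fun x => Real.exp (c*x)) (Iio (-1)) := by
      have h1 : IntegrableOn Real.exp (Iio (-c)) :=
        (integrableOn_exp_Iic (-c)).mono_set Iio_subset_Iic_self
      have h2 : Integrable ((Iio (-c)).indicator Real.exp) :=
        (integrable_indicator_iff measurableSet_Iio).2 h1
      have h3 := h2.comp_mul_left' (ne_of_gt hc)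
      have h4 : (fun x => (Iio (-c)).indicator Real.exp (c * x))
          = (Iio (-1:ℝ)).indicator (fun x => Real.exp (c*x)) := by
        funext x
        by_cases hx : x < -1
        · rw [Set.indicator_of_mem (show c*x ∈ Iio (-c) by simp only [mem_Iio]; nlinarith),
            Set.indicator_of_mem (by simpa using hx)]
        · rw [Set.indicator_of_notMem (show c*x ∉ Iio (-c) by
              simp only [mem_Iio, not_lt] at hx ⊢; nlinarith),
            Set.indicator_of_notMem (by simpa using hx)]
      rw [h4] at h3
      exact (integrable_indicator_iff measurableSet_Iio).1 h3
    refine Integrable.mono (hexp.const_mul M) hmeas.aestronglyMeasurable.restrict ?_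
    refine (ae_restrict_iff' measurableSet_Iio).2 (ae_of_all _ fun x hx => ?_)
    simp only [mem_Iio] at hx
    have hu0 : (0:ℝ) < 1 - Real.exp (2*x) := u_pos (by linarith)
    have hub : (1 - Real.exp (2*x)) ^ p ≤ M := by
      rcases le_or_gt 0 p with h | h
      · exact le_trans (Real.rpow_le_one hu0.le u_le_one h) (le_max_left _ _)
      · refine le_trans ?_ (le_max_right _ _)
        apply Real.rpow_le_rpow_of_nonpos hc₁pos ?_ h.le
        have := Real.exp_le_exp.2 (show 2*x ≤ -2 by linarith)
        linarith
    rw [Real.norm_eq_abs, Real.norm_eq_abs,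
      abs_of_nonneg (mul_nonneg (Real.exp_pos _).le (Real.rpow_nonneg hu0.le p)),
      abs_of_nonneg (mul_nonneg (le_max_of_le_left zero_le_one) (Real.exp_pos _).le)]
    calc Real.exp (c*x) * (1 - Real.exp (2*x)) ^ p
        ≤ Real.exp (c*x) * M := mul_le_mul_of_nonneg_left hub (Real.exp_pos _).le
      _ = M * Real.exp (c*x) := mul_comm _ _
  · -- near zero
    set M : ℝ := max ((2:ℝ) ^ p) ((1 - Real.exp (-2)) ^ p) with hM
    have hMpos : 0 < M := lt_max_of_lt_left (by positivity)
    have hrint : IntegrableOn (fun x : ℝ => (-x) ^ p) (Ico (-1) 0) := by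
      have h1 : IntervalIntegrable (fun x : ℝ => x ^ p) volume 0 1 :=
        intervalIntegral.intervalIntegrable_rpow' hp
      have h2 := h1.comp_mul_left (c := -1)
      norm_num [neg_mul] at h2
      have h3 := h2.symm
      rw [intervalIntegrable_iff_integrableOn_Icc_of_le (by norm_num)] at h3
      exact h3.mono_set Ico_subset_Icc_self
    refine Integrable.mono (hrint.const_mul M) hmeas.aestronglyMeasurable.restrict ?_
    refine (ae_restrict_iff' measurableSet_Ico).2 (ae_of_all _ fun x hx => ?_)
    obtain ⟨hx1, hx2⟩ := hx
    have hu0 : (0:ℝ) < 1 - Real.exp (2*x) := u_pos (by linarith)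
    have hxneg : 0 < -x := by linarith
    have hub : (1 - Real.exp (2*x)) ^ p ≤ M * (-x) ^ p := by
      rcases le_or_gt 0 p with h | h
      · calc (1 - Real.exp (2*x)) ^ p ≤ (2 * (-x)) ^ p := by
              apply Real.rpow_le_rpow hu0.le ?_ h
              have := key_upper x; linarith
          _ = 2 ^ p * (-x) ^ p := Real.mul_rpow (by norm_num) hxneg.le
          _ ≤ M * (-x) ^ p :=
              mul_le_mul_of_nonneg_right (le_max_left _ _) (Real.rpow_nonneg hxneg.le p)
      · calc (1 - Real.exp (2*x)) ^ p ≤ ((1 - Real.exp (-2)) * (-x)) ^ p := by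
              apply Real.rpow_le_rpow_of_nonpos (by positivity) ?_ h.le
              exact key_lower hx1 hx2.le
          _ = (1 - Real.exp (-2)) ^ p * (-x) ^ p := Real.mul_rpow hc₁pos.le hxneg.le
          _ ≤ M * (-x) ^ p :=
              mul_le_mul_of_nonneg_right (le_max_right _ _) (Real.rpow_nonneg hxneg.le p)
    rw [Real.norm_eq_abs, Real.norm_eq_abs,
      abs_of_nonneg (mul_nonneg (Real.exp_pos _).le (Real.rpow_nonneg hu0.le p)),
      abs_of_nonneg (mul_nonneg hMpos.le (Real.rpow_nonneg hxneg.le p))]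
    calc Real.exp (c*x) * (1 - Real.exp (2*x)) ^ p
        ≤ 1 * ((1 - Real.exp (2*x)) ^ p) := by
          apply mul_le_mul_of_nonneg_right _ (Real.rpow_nonneg hu0.le p)
          exact Real.exp_le_one_iff.2 (by nlinarith)
      _ ≤ M * (-x) ^ p := by rw [one_mul]; exact hub

/-! ### Properties of `eigfun` -/

lemma measurable_eigfun (lam : ℂ) : Measurable (eigfun lam) := by
  unfold eigfun
  exact Measurable.ite measurableSet_Iio (by fun_prop) measurable_const

lemma re_half (lam : ℂ) : ((1 - lam)/2).re = (1 - lam.re)/2 := by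
  simp [Complex.div_re, Complex.sub_re, Complex.normSq]

lemma norm_eigfun {lam : ℂ} {ξ : ℝ} (h : ξ < 0) :
    ‖eigfun lam ξ‖ = Real.exp (lam.re * ξ) * (1 - Real.exp (2*ξ)) ^ ((1 - lam.re)/2) := by
  rw [eigfun, if_pos h, norm_mul, Complex.norm_exp,
    Complex.norm_cpow_eq_rpow_re_of_pos (u_pos h), re_half]
  congr 1
  simp [Complex.mul_re]

lemma eigfun_ne_zero {lam : ℂ} {ξ : ℝ} (h : ξ < 0) : eigfun lam ξ ≠ 0 := by
  rw [eigfun, if_pos h]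
  apply mul_ne_zero (Complex.exp_ne_zero _)
  rw [Ne, Complex.cpow_eq_zero_iff]
  push_neg
  intro h'
  exact absurd h' (by exact_mod_cast ne_of_gt (u_pos h))

/-! ### The auxiliary function `W = (1-φ²)·v` -/

/-- `W(ξ) = (1 - e^{2ξ}) v(ξ)`, which extends continuously by `0` at `ξ = 0`. -/
noncomputable def Wfun (lam : ℂ) (ξ : ℝ) : ℂ :=
  if ξ < 0 then
    Complex.exp (lam * ξ) * ((1 - Real.exp (2 * ξ) : ℝ) : ℂ) ^ ((3 - lam) / 2)
  else 0

lemma measurable_Wfun (lam : ℂ) : Measurable (Wfun lam) := by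
  unfold Wfun
  exact Measurable.ite measurableSet_Iio (by fun_prop) measurable_const

lemma Wfun_eq {lam : ℂ} {ξ : ℝ} (h : ξ < 0) :
    Wfun lam ξ = ((1 - Real.exp (2*ξ) : ℝ) : ℂ) * eigfun lam ξ := by
  rw [Wfun, if_pos h, eigfun, if_pos h]
  have h3 : ((3 - lam)/2 : ℂ) = 1 + (1-lam)/2 := by ring
  rw [h3, Complex.cpow_add _ _ (u_ne h), Complex.cpow_one]
  ring

lemma Wfun_zero (lam : ℂ) : Wfun lam 0 = 0 := by
  rw [Wfun, if_neg (lt_irrefl 0)]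

lemma re_half3 (lam : ℂ) : ((3 - lam)/2).re = (3 - lam.re)/2 := by
  simp [Complex.div_re, Complex.sub_re, Complex.normSq]

lemma norm_Wfun {lam : ℂ} {ξ : ℝ} (h : ξ < 0) :
    ‖Wfun lam ξ‖ = Real.exp (lam.re * ξ) * (1 - Real.exp (2*ξ)) ^ ((3 - lam.re)/2) := by
  rw [Wfun, if_pos h, norm_mul, Complex.norm_exp,
    Complex.norm_cpow_eq_rpow_re_of_pos (u_pos h), re_half3]
  congr 1
  simp [Complex.mul_re]

lemma norm_Wfun_le_norm_eigfun {lam : ℂ} {ξ : ℝ} (h : ξ < 0) :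
    ‖Wfun lam ξ‖ ≤ ‖eigfun lam ξ‖ := by
  rw [Wfun_eq h, norm_mul]
  have h1 : ‖((1 - Real.exp (2*ξ) : ℝ) : ℂ)‖ ≤ 1 := by
    rw [Complex.norm_real, Real.norm_eq_abs, abs_of_pos (u_pos h)]
    exact u_le_one
  calc ‖((1 - Real.exp (2*ξ) : ℝ) : ℂ)‖ * ‖eigfun lam ξ‖
      ≤ 1 * ‖eigfun lam ξ‖ := mul_le_mul_of_nonneg_right h1 (norm_nonneg _)
    _ = ‖eigfun lam ξ‖ := one_mul _

lemma hasDerivAt_Wfun {lam : ℂ} {x : ℝ} (hx : x < 0) :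
    HasDerivAt (Wfun lam)
      (lam * Wfun lam x - (3 - lam) * ((Real.exp (2*x) : ℝ) : ℂ) * eigfun lam x) x := by
  set s : ℂ := (3 - lam)/2 with hs
  have hyeq : ∀ y : ℝ, 1 - Complex.exp (2*(y:ℂ)) = ((1 - Real.exp (2*y) : ℝ) : ℂ) := by
    intro y; push_cast; ring_nf
  have hfz : HasDerivAt (fun z : ℂ => 1 - Complex.exp (2*z))
      (-(Complex.exp (2*(x:ℂ)) * 2)) (x:ℂ) := by
    simpa using (((hasDerivAt_id (x:ℂ)).const_mul 2).cexp).const_sub 1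
  have hslit : (1 - Complex.exp (2*(x:ℂ))) ∈ Complex.slitPlane := by
    rw [hyeq x]
    exact Complex.ofReal_mem_slitPlane.2 (u_pos hx)
  have h3 : HasDerivAt (fun z : ℂ => (1 - Complex.exp (2*z)) ^ s)
      (s * (1 - Complex.exp (2*(x:ℂ))) ^ (s - 1) * (-(Complex.exp (2*(x:ℂ)) * 2))) (x:ℂ) :=
    hfz.cpow_const hslit
  have h1 : HasDerivAt (fun z : ℂ => Complex.exp (lam * z)) (Complex.exp (lam * x) * lam) (x:ℂ) := by
    simpa using ((hasDerivAt_id (x:ℂ)).const_mul lam).cexp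
  have h4 := (h1.mul h3).comp_ofReal (z := x)
  have heq : Wfun lam =ᶠ[nhds x] fun y : ℝ =>
      Complex.exp (lam * (y:ℂ)) * (1 - Complex.exp (2*(y:ℂ))) ^ s := by
    filter_upwards [Iio_mem_nhds hx] with y hy
    have hy' : y < 0 := hy
    simp only [Wfun]
    rw [if_pos hy', hyeq y]
  have h5 := h4.congr_of_eventuallyEq heq
  convert h5 using 1
  · rfl
  -- algebra
  simp only [Wfun, eigfun]
  rw [if_pos hx, if_pos hx, hyeq x]
  have hexp : ((1 - Real.exp (2*x) : ℝ) : ℂ) ^ (s - 1)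
      = ((1 - Real.exp (2*x) : ℝ) : ℂ) ^ ((1 - lam)/2) := by
    rw [hs]; congr 1; ring
  rw [hexp, hs]
  have he2 : Complex.exp (2*(x:ℂ)) = ((Real.exp (2*x) : ℝ) : ℂ) := by push_cast; ring_nf
  rw [he2]
  ring

lemma continuousOn_Wfun {lam : ℂ} (h0 : 0 < lam.re) (h3 : lam.re < 3) {a : ℝ} :
    ContinuousOn (Wfun lam) (Icc a 0) := by
  intro x hx
  rcases lt_or_eq_of_le hx.2 with hlt | heq
  · exact ((hasDerivAt_Wfun hlt).continuousAt).continuousWithinAt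
  · subst heq
    set q : ℝ := (3 - lam.re)/2 with hq
    have hqpos : 0 < q := by rw [hq]; linarith
    rw [ContinuousWithinAt, Wfun_zero]
    have hbd : ∀ᶠ y in nhdsWithin 0 (Icc a 0), ‖Wfun lam y‖ ≤ (1 - Real.exp (2*y)) ^ q := by
      apply eventually_of_mem self_mem_nhdsWithin
      intro y hy
      rcases lt_or_eq_of_le hy.2 with hy' | hy'
      · rw [norm_Wfun hy']
        have hu := u_pos hy'
        calc Real.exp (lam.re * y) * (1 - Real.exp (2*y)) ^ q
            ≤ 1 * (1 - Real.exp (2*y)) ^ q := by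
              apply mul_le_mul_of_nonneg_right _ (Real.rpow_nonneg hu.le q)
              exact Real.exp_le_one_iff.2 (by nlinarith)
          _ = (1 - Real.exp (2*y)) ^ q := one_mul _
      · subst hy'
        simp [Wfun_zero, Real.zero_rpow hqpos.ne']
    refine squeeze_zero_norm' hbd ?_
    · have h1 : Tendsto (fun y : ℝ => 1 - Real.exp (2*y)) (nhds 0) (nhds 0) := by
        have hc : Continuous (fun y : ℝ => 1 - Real.exp (2*y)) := by fun_prop
        have := hc.tendsto 0
        simpa using this
      have h2 : Tendsto (fun t : ℝ => t ^ q) (nhds 0) (nhds 0) := by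
        have := (Real.continuousAt_rpow_const 0 q (Or.inr hqpos.le)).tendsto
        rwa [Real.zero_rpow hqpos.ne'] at this
      exact (h2.comp h1).mono_left nhdsWithin_le_nhds

/-! ### Main theorem -/

/-- For `0 < Re λ < 2` the function `eigfun lam` is a nonzero element of `L²(ℝ)` satisfying
`(1-φ²)v' + φφ'v = λ v` in the sense of distributions; hence `λ` is an eigenvalue of `L`
on `L²(ℝ)`. -/
theorem point_spectrum_L2
    (lam : ℂ) (h0 : 0 < lam.re) (h2 : lam.re < 2) :
    MeasureTheory.MemLp (eigfun lam) 2 (volume : Measure ℝ)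
    ∧ ¬ (∀ᵐ ξ : ℝ, eigfun lam ξ = 0)
    ∧ (∀ ψ : ℝ → ℂ, ContDiff ℝ (⊤ : ℕ∞) ψ → HasCompactSupport ψ →
        (-(∫ x : ℝ, eigfun lam x *
              (((-2 * phi x * phi' x : ℝ) : ℂ) * ψ x + ((1 - phi x ^ 2 : ℝ) : ℂ) * deriv ψ x))
          + ∫ x : ℝ, ((phi x * phi' x : ℝ) : ℂ) * eigfun lam x * ψ x)
          = lam * ∫ x : ℝ, eigfun lam x * ψ x) := by
  have hmeasv := measurable_eigfun lam
  refine ⟨?_, ?_, ?_⟩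
  · -- Memℒp
    rw [memLp_two_iff_integrable_sq_norm hmeasv.aestronglyMeasurable]
    have key := integrableOn_master (c := 2*lam.re) (p := 1 - lam.re) (by linarith) (by linarith)
    have heq : (fun x => ‖eigfun lam x‖^2)
        = (Iio 0).indicator
            (fun x => Real.exp ((2*lam.re)*x) * (1 - Real.exp (2*x)) ^ (1 - lam.re)) := by
      funext x
      by_cases hx : x < 0
      · rw [Set.indicator_of_mem (show x ∈ Iio (0:ℝ) from hx), norm_eigfun hx]
        have hu := u_pos hx
        have e1 : Real.exp (lam.re * x) ^ 2 = Real.exp (2*lam.re*x) := by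
          rw [sq, ← Real.exp_add]; congr 1; ring
        have e2 : ((1 - Real.exp (2*x)) ^ ((1-lam.re)/2)) ^ 2
            = (1 - Real.exp (2*x)) ^ (1 - lam.re) := by
          rw [sq, ← Real.rpow_add hu]; congr 1; ring
        rw [mul_pow, e1, e2]
      · rw [Set.indicator_of_notMem (show x ∉ Iio (0:ℝ) from hx), eigfun, if_neg hx]; simp
    rw [heq]
    exact (integrable_indicator_iff measurableSet_Iio).2 key
  · -- nonzero
    intro h
    have h2' : ∀ᵐ ξ ∂(volume.restrict (Iio (0:ℝ))), False := by
      filter_upwards [ae_restrict_of_ae h, ae_restrict_mem measurableSet_Iio] with ξ h1 hξ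
      exact eigfun_ne_zero hξ h1
    rw [ae_iff] at h2'
    simp only [not_false_iff, setOf_true, Measure.restrict_apply_univ] at h2'
    simpa [h2'] using (by simp : volume (Iio (0:ℝ)) = ⊤)
  · -- distributional identity
    intro ψ hψ hψc
    obtain ⟨r, hr⟩ := hψc.isBounded.subset_closedBall 0
    set a : ℝ := -(|r| + 1) with ha
    have ha0 : a < 0 := by
      rw [ha]; have := abs_nonneg r; linarith
    have hsupp : ∀ x : ℝ, x ≤ a → x ∉ tsupport ψ := by
      intro x hx hmem
      have h1 := hr hmem
      rw [Metric.mem_closedBall, Real.dist_eq, sub_zero] at h1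
      have h2' : |x| ≤ |r| := le_trans h1 (le_abs_self r)
      have h3 := (abs_le.1 h2').1
      rw [ha] at hx; linarith
    have hψ0 : ∀ x ≤ a, ψ x = 0 := fun x hx =>
      image_eq_zero_of_notMem_tsupport (hsupp x hx)
    have hdψ0 : ∀ x ≤ a, deriv ψ x = 0 := by
      intro x hx
      by_contra h
      exact hsupp x hx (support_deriv_subset (by simpa using h))
    have hψcont := hψ.continuous
    have hdψcont : Continuous (deriv ψ) := hψ.continuous_deriv (by simp)
    obtain ⟨Cψ, hCψ⟩ := hψc.exists_bound_of_continuous hψcont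
    obtain ⟨Cd, hCd⟩ := (hψc.deriv).exists_bound_of_continuous hdψcont
    have hCψ0 : 0 ≤ Cψ := le_trans (norm_nonneg _) (hCψ 0)
    have hCd0 : 0 ≤ Cd := le_trans (norm_nonneg _) (hCd 0)
    have hIoo : Ioo a 0 ⊆ Iio (0:ℝ) := Ioo_subset_Iio_self
    -- integrability of the eigenfunction on (a, 0)
    have Ivn : IntegrableOn (fun x => ‖eigfun lam x‖) (Ioo a 0) := by
      apply Integrable.congr
        ((integrableOn_master (c := lam.re) (p := (1-lam.re)/2) h0 (by linarith)).mono_set hIoo)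
      refine (ae_restrict_iff' measurableSet_Ioo).2 (ae_of_all _ fun x hx => ?_)
      exact (norm_eigfun hx.2).symm
    have Iv : IntegrableOn (eigfun lam) (Ioo a 0) :=
      (integrable_norm_iff hmeasv.aestronglyMeasurable.restrict).mp Ivn
    -- generic domination principle
    have key_int : ∀ (C : ℝ) (F : ℝ → ℂ), AEStronglyMeasurable F (volume.restrict (Ioo a 0)) →
        (∀ x ∈ Ioo a 0, ‖F x‖ ≤ C * ‖eigfun lam x‖) → IntegrableOn F (Ioo a 0) := by
      intro C F hFm hFb
      refine Integrable.mono' (Ivn.const_mul C) hFm ?_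
      exact (ae_restrict_iff' measurableSet_Ioo).2 (ae_of_all _ hFb)
    have hWm := measurable_Wfun lam
    -- the five integrands
    have IW : IntegrableOn (fun x => Wfun lam x * ψ x) (Ioo a 0) := by
      refine key_int Cψ (fun x => Wfun lam x * ψ x)
        ((hWm.mul hψcont.measurable).aestronglyMeasurable.restrict) ?_
      intro x hx
      rw [norm_mul]
      calc ‖Wfun lam x‖ * ‖ψ x‖
          ≤ ‖eigfun lam x‖ * Cψ :=
            mul_le_mul (norm_Wfun_le_norm_eigfun hx.2) (hCψ x) (norm_nonneg _) (norm_nonneg _)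
        _ = Cψ * ‖eigfun lam x‖ := mul_comm _ _
    have IB : IntegrableOn (fun x => Wfun lam x * deriv ψ x) (Ioo a 0) := by
      refine key_int Cd (fun x => Wfun lam x * deriv ψ x)
        ((hWm.mul hdψcont.measurable).aestronglyMeasurable.restrict) ?_
      intro x hx
      rw [norm_mul]
      calc ‖Wfun lam x‖ * ‖deriv ψ x‖
          ≤ ‖eigfun lam x‖ * Cd :=
            mul_le_mul (norm_Wfun_le_norm_eigfun hx.2) (hCd x) (norm_nonneg _) (norm_nonneg _)
        _ = Cd * ‖eigfun lam x‖ := mul_comm _ _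
    have he2norm : ∀ x : ℝ, x < 0 → ‖((Real.exp (2*x) : ℝ) : ℂ)‖ ≤ 1 := by
      intro x hx
      rw [Complex.norm_real, Real.norm_eq_abs, abs_of_pos (Real.exp_pos _)]
      exact Real.exp_le_one_iff.2 (by linarith)
    have Ih : IntegrableOn (fun x => ((Real.exp (2*x) : ℝ) : ℂ) * eigfun lam x * ψ x)
        (Ioo a 0) := by
      refine key_int Cψ (fun x => ((Real.exp (2*x) : ℝ) : ℂ) * eigfun lam x * ψ x)
        ((((by fun_prop : Measurable fun x : ℝ => ((Real.exp (2*x) : ℝ) : ℂ)).mul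
          hmeasv).mul hψcont.measurable).aestronglyMeasurable.restrict) ?_
      intro x hx
      rw [norm_mul, norm_mul]
      calc ‖((Real.exp (2*x) : ℝ) : ℂ)‖ * ‖eigfun lam x‖ * ‖ψ x‖
          ≤ 1 * ‖eigfun lam x‖ * Cψ := by
            apply mul_le_mul _ (hCψ x) (norm_nonneg _)
            · exact mul_nonneg zero_le_one (norm_nonneg _)
            · exact mul_le_mul_of_nonneg_right (he2norm x hx.2) (norm_nonneg _)
        _ = Cψ * ‖eigfun lam x‖ := by ring
    have Ivψ : IntegrableOn (fun x => eigfun lam x * ψ x) (Ioo a 0) := by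
      refine key_int Cψ (fun x => eigfun lam x * ψ x)
        ((hmeasv.mul hψcont.measurable).aestronglyMeasurable.restrict) ?_
      intro x _
      rw [norm_mul]
      calc ‖eigfun lam x‖ * ‖ψ x‖ ≤ ‖eigfun lam x‖ * Cψ :=
            mul_le_mul_of_nonneg_left (hCψ x) (norm_nonneg _)
        _ = Cψ * ‖eigfun lam x‖ := mul_comm _ _
    -- FTC on [a, 0]
    have hFTC : (∫ y in Ioo a 0,
        ((lam * Wfun lam y - (3 - lam) * ((Real.exp (2*y) : ℝ) : ℂ) * eigfun lam y) * ψ y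
          + Wfun lam y * deriv ψ y)) = 0 := by
      have hcont : ContinuousOn (fun y => Wfun lam y * ψ y) (Icc a 0) :=
        (continuousOn_Wfun h0 (by linarith)).mul hψcont.continuousOn
      have hderiv : ∀ x ∈ Ioo a 0, HasDerivWithinAt (fun y => Wfun lam y * ψ y)
          ((lam * Wfun lam x - (3 - lam) * ((Real.exp (2*x) : ℝ) : ℂ) * eigfun lam x) * ψ x
            + Wfun lam x * deriv ψ x) (Ioi x) x := by
        intro x hx
        exact ((hasDerivAt_Wfun hx.2).mul
          ((hψ.differentiable (by simp)).differentiableAt.hasDerivAt)).hasDerivWithinAt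
      have hint : IntervalIntegrable (fun y =>
          (lam * Wfun lam y - (3 - lam) * ((Real.exp (2*y) : ℝ) : ℂ) * eigfun lam y) * ψ y
            + Wfun lam y * deriv ψ y) volume a 0 := by
        rw [intervalIntegrable_iff_integrableOn_Ioc_of_le ha0.le,
          integrableOn_Ioc_iff_integrableOn_Ioo]
        refine Integrable.add ?_ IB
        apply key_int ((‖lam‖ + ‖3 - lam‖) * Cψ) _ ?_ ?_
        · apply AEStronglyMeasurable.mul _ hψcont.aestronglyMeasurable.restrict
          apply AEStronglyMeasurable.sub
          · exact (hWm.aestronglyMeasurable.const_mul lam).restrict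
          · exact ((((by fun_prop : Measurable fun x : ℝ => ((Real.exp (2*x) : ℝ) : ℂ))
              |>.const_mul (3 - lam)).mul hmeasv).aestronglyMeasurable).restrict
        · intro x hx
          rw [norm_mul]
          have hb : ‖lam * Wfun lam x - (3 - lam) * ((Real.exp (2*x) : ℝ) : ℂ) * eigfun lam x‖
              ≤ (‖lam‖ + ‖3 - lam‖) * ‖eigfun lam x‖ := by
            calc ‖lam * Wfun lam x - (3 - lam) * ((Real.exp (2*x) : ℝ) : ℂ) * eigfun lam x‖
                ≤ ‖lam * Wfun lam x‖
                  + ‖(3 - lam) * ((Real.exp (2*x) : ℝ) : ℂ) * eigfun lam x‖ := norm_sub_le _ _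
              _ ≤ ‖lam‖ * ‖eigfun lam x‖ + ‖3 - lam‖ * (1 * ‖eigfun lam x‖) := by
                  apply add_le_add
                  · rw [norm_mul]
                    exact mul_le_mul_of_nonneg_left (norm_Wfun_le_norm_eigfun hx.2)
                      (norm_nonneg _)
                  · rw [norm_mul, norm_mul, mul_assoc]
                    apply mul_le_mul_of_nonneg_left _ (norm_nonneg _)
                    exact mul_le_mul_of_nonneg_right (he2norm x hx.2) (norm_nonneg _)
              _ = (‖lam‖ + ‖3 - lam‖) * ‖eigfun lam x‖ := by ring
          calc ‖lam * Wfun lam x - (3 - lam) * ((Real.exp (2*x) : ℝ) : ℂ) * eigfun lam x‖ * ‖ψ x‖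
              ≤ ((‖lam‖ + ‖3 - lam‖) * ‖eigfun lam x‖) * Cψ := by
                apply mul_le_mul hb (hCψ x) (norm_nonneg _)
                positivity
            _ = (‖lam‖ + ‖3 - lam‖) * Cψ * ‖eigfun lam x‖ := by ring
      have := intervalIntegral.integral_eq_sub_of_hasDeriv_right_of_le ha0.le hcont hderiv hint
      rw [Wfun_zero, zero_mul, hψ0 a le_rfl, mul_zero, sub_zero] at this
      rw [← integral_Ioc_eq_integral_Ioo, ← intervalIntegral.integral_of_le ha0.le]
      exact this
    -- split the FTC identity
    have IA : IntegrableOn (fun y =>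
        (lam * Wfun lam y - (3 - lam) * ((Real.exp (2*y) : ℝ) : ℂ) * eigfun lam y) * ψ y)
        (Ioo a 0) := by
      have heq : (fun y =>
          (lam * Wfun lam y - (3 - lam) * ((Real.exp (2*y) : ℝ) : ℂ) * eigfun lam y) * ψ y)
          = fun y => lam * (Wfun lam y * ψ y)
            - (3 - lam) * (((Real.exp (2*y) : ℝ) : ℂ) * eigfun lam y * ψ y) := by
        funext y; ring
      rw [heq]
      exact (IW.const_mul lam).sub (Ih.const_mul (3 - lam))
    have hFTC2 : lam * (∫ y in Ioo a 0, Wfun lam y * ψ y)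
        - (3 - lam) * (∫ y in Ioo a 0, ((Real.exp (2*y) : ℝ) : ℂ) * eigfun lam y * ψ y)
        + (∫ y in Ioo a 0, Wfun lam y * deriv ψ y) = 0 := by
      rw [← integral_const_mul lam, ← integral_const_mul (3 - lam), ← integral_sub
        (IW.const_mul lam) (Ih.const_mul (3 - lam)), ← integral_add ?_ IB]
      · rw [← hFTC]
        congr 1
        funext y
        ring
      · have heq : (fun y => lam * (Wfun lam y * ψ y)
            - (3 - lam) * (((Real.exp (2*y) : ℝ) : ℂ) * eigfun lam y * ψ y)) = fun y =>
            (lam * Wfun lam y - (3 - lam) * ((Real.exp (2*y) : ℝ) : ℂ) * eigfun lam y) * ψ y := by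
          funext y; ring
        rw [heq]
        exact IA
    -- reduce the three integrals over ℝ to integrals over (a, 0)
    have hoff : ∀ x : ℝ, x ∉ Ioo a 0 → x ≤ a ∨ 0 ≤ x := by
      intro x hx
      by_cases h1 : x ≤ a
      · exact Or.inl h1
      · right
        by_contra h2
        exact hx ⟨lt_of_not_ge h1, lt_of_not_ge h2⟩
    have heig0 : ∀ x : ℝ, 0 ≤ x → eigfun lam x = 0 := by
      intro x hx; rw [eigfun, if_neg (not_lt.2 hx)]
    have hphi : ∀ x : ℝ, x < 0 → phi x = Real.exp x := by
      intro x hx; rw [phi, abs_of_neg hx, neg_neg]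
    have hphi' : ∀ x : ℝ, x < 0 → phi' x = Real.exp x := by
      intro x hx; rw [phi', Real.sign_of_neg hx, abs_of_neg hx, neg_neg]; ring
    have r1 : (∫ x : ℝ, eigfun lam x *
          (((-2 * phi x * phi' x : ℝ) : ℂ) * ψ x + ((1 - phi x ^ 2 : ℝ) : ℂ) * deriv ψ x))
        = (-2) * (∫ x in Ioo a 0, ((Real.exp (2*x) : ℝ) : ℂ) * eigfun lam x * ψ x)
          + (∫ x in Ioo a 0, Wfun lam x * deriv ψ x) := by
      rw [← integral_const_mul, ← integral_add (Ih.const_mul (-2)) IB]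
      rw [← setIntegral_eq_integral_of_forall_compl_eq_zero (s := Ioo a 0) ?_]
      · apply setIntegral_congr_fun measurableSet_Ioo
        intro x hx
        have hx0 : x < 0 := hx.2
        dsimp only
        rw [hphi x hx0, hphi' x hx0, Wfun_eq hx0]
        have he : Real.exp x * Real.exp x = Real.exp (2*x) := by
          rw [← Real.exp_add]; congr 1; ring
        have h1 : (-2 * Real.exp x * Real.exp x : ℝ) = -2 * Real.exp (2*x) := by
          rw [mul_assoc, he]
        have h2 : (1 - Real.exp x ^ 2 : ℝ) = 1 - Real.exp (2*x) := by rw [sq, he]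
        rw [h1, h2]
        push_cast
        ring
      · intro x hx
        rcases hoff x hx with h | h
        · rw [hψ0 x h, hdψ0 x h]
          simp
        · rw [heig0 x h]
          simp
    have r2 : (∫ x : ℝ, ((phi x * phi' x : ℝ) : ℂ) * eigfun lam x * ψ x)
        = ∫ x in Ioo a 0, ((Real.exp (2*x) : ℝ) : ℂ) * eigfun lam x * ψ x := by
      rw [← setIntegral_eq_integral_of_forall_compl_eq_zero (s := Ioo a 0) ?_]
      · apply setIntegral_congr_fun measurableSet_Ioo
        intro x hx
        have hx0 : x < 0 := hx.2
        dsimp only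
        rw [hphi x hx0, hphi' x hx0]
        have he : Real.exp x * Real.exp x = Real.exp (2*x) := by
          rw [← Real.exp_add]; congr 1; ring
        rw [show ((Real.exp x * Real.exp x : ℝ) : ℂ) = ((Real.exp (2*x) : ℝ) : ℂ) by rw [he]]
      · intro x hx
        rcases hoff x hx with h | h
        · rw [hψ0 x h]; simp
        · rw [heig0 x h]; simp
    have r3 : (∫ x : ℝ, eigfun lam x * ψ x) = ∫ x in Ioo a 0, eigfun lam x * ψ x := by
      rw [← setIntegral_eq_integral_of_forall_compl_eq_zero (s := Ioo a 0) ?_]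
      intro x hx
      rcases hoff x hx with h | h
      · rw [hψ0 x h]; simp
      · rw [heig0 x h]; simp
    have hsum : (∫ x in Ioo a 0, ((Real.exp (2*x) : ℝ) : ℂ) * eigfun lam x * ψ x)
        + (∫ x in Ioo a 0, Wfun lam x * ψ x) = ∫ x in Ioo a 0, eigfun lam x * ψ x := by
      rw [← integral_add Ih IW]
      apply setIntegral_congr_fun measurableSet_Ioo
      intro x hx
      dsimp only
      rw [Wfun_eq hx.2]
      push_cast
      ring
    rw [r1, r2, r3]
    linear_combination (-1 : ℂ) * hFTC2 + lam * hsum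
end

section
/- Let λ ∈ ℂ with Re(λ) > 0. Then the adjoint eigenvalue problem −(1 − φ²) v' + 3 φ φ' v = λ v, with φ(x) = e^{-|x|}, has no nonzero solution in L²(ℝ). -/
open MeasureTheory Real Set Filter

/-!
On each half-line the equation is a linear first-order ODE. On `(0, ∞)`, and for `ξ ↦ v (-ξ)`
on the reflected negative half-line, it reads `(1 - e^{-2ξ}) w' = (μ - 3 e^{-2ξ}) w` with
`μ = -λ`, respectively `μ = λ`. Its solutions are the multiples of
`(e^{2ξ} - 1)^{μ/2} (1 - e^{-2ξ})^{-3/2}`, whose squared modulus is `≥ 1` for `ξ ≥ 1` when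
`Re μ ≥ 0` and `≥ 1 / (2ξ)` near `0⁺` when `Re μ ≤ 0`. Either way no nonzero solution is
square-integrable on `(0, ∞)`.
-/

theorem exists_eq_const_mul_of_hasDerivAt {𝕜 : Type*} [NontriviallyNormedField 𝕜]
    [NormedAlgebra ℝ 𝕜] {f g a : ℝ → 𝕜} {s : Set ℝ} (hs : IsOpen s) (hs' : IsPreconnected s)
    (hf : ∀ x ∈ s, HasDerivAt f (a x * f x) x) (hg : ∀ x ∈ s, HasDerivAt g (a x * g x) x)
    (hg0 : ∀ x ∈ s, g x ≠ 0) : ∃ C, ∀ x ∈ s, f x = C * g x := by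
  have hquot : ∀ x ∈ s, HasDerivAt (f / g) 0 x := fun x hx => by
    convert (hf x hx).div (hg x hx) (hg0 x hx) using 1
    rw [mul_left_comm (f x), ← mul_assoc, sub_self, zero_div]
  obtain ⟨C, hC⟩ := hs.exists_is_const_of_deriv_eq_zero hs'
    (fun x hx => (hquot x hx).differentiableAt.differentiableWithinAt)
    (fun x hx => (hquot x hx).deriv)
  exact ⟨C, fun x hx => by rw [← hC x hx, Pi.div_apply, div_mul_cancel₀ _ (hg0 x hx)]⟩

theorem not_integrableOn_Ioi_of_const_le {f : ℝ → ℝ} {a c : ℝ} (hc : 0 < c)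
    (hf : ∀ x ∈ Ioi a, c ≤ f x) : ¬ IntegrableOn f (Ioi a) := by
  intro hint
  have : IntegrableOn (fun _ => c) (Ioi a) := hint.mono' aestronglyMeasurable_const <| by
    filter_upwards [self_mem_ae_restrict measurableSet_Ioi] with x hx
    rw [Real.norm_of_nonneg hc.le]
    exact hf x hx
  simp [integrableOn_const_iff, hc.ne'] at this

theorem not_integrableOn_Ioo_of_const_mul_inv_le {f : ℝ → ℝ} {a c : ℝ} (ha : 0 < a) (hc : 0 < c)
    (hf : ∀ x ∈ Ioo 0 a, c * x⁻¹ ≤ f x) : ¬ IntegrableOn f (Ioo 0 a) := by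
  intro hint
  have : IntegrableOn (fun x => c * x⁻¹) (Ioo 0 a) := hint.mono'
      (measurable_inv.const_mul c).aestronglyMeasurable <| by
    filter_upwards [self_mem_ae_restrict measurableSet_Ioo] with x hx
    rw [Real.norm_of_nonneg (by have := hx.1; positivity)]
    exact hf x hx
  have hinv : IntervalIntegrable (fun x => x⁻¹) volume 0 a := by
    rw [intervalIntegrable_iff_integrableOn_Ioo_of_le ha.le]
    simpa [IntegrableOn, ← mul_assoc, hc.ne'] using this.const_mul c⁻¹
  simp [ha.ne] at hinv

noncomputable def halfLineCoeff (μ : ℂ) (ξ : ℝ) : ℂ :=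
  (μ - 3 * rexp (-2 * ξ)) / (1 - rexp (-2 * ξ))

/-- In closed form `(e^{2ξ} - 1)^{μ/2} (1 - e^{-2ξ})^{-3/2} = e^{μξ} (1 - e^{-2ξ})^{(μ-3)/2}`. -/
noncomputable def halfLineSolution (μ : ℂ) (ξ : ℝ) : ℂ :=
  Complex.exp (μ / 2 * Real.log (rexp (2 * ξ) - 1) - 3 / 2 * Real.log (1 - rexp (-2 * ξ)))

theorem hasDerivAt_halfLineSolution (μ : ℂ) {ξ : ℝ} (hξ : 0 < ξ) :
    HasDerivAt (halfLineSolution μ) (halfLineCoeff μ ξ * halfLineSolution μ ξ) ξ := by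
  set G := rexp (2 * ξ)
  set Q := rexp (-2 * ξ)
  have hG : 1 < G := one_lt_exp_iff.2 (by linarith)
  have hQ : Q < 1 := exp_lt_one_iff.2 (by linarith)
  have hGQ : (G : ℂ) * Q = 1 := by exact_mod_cast (exp_add _ _).symm.trans (by simp)
  have hℓ : HasDerivAt (fun t => Real.log (rexp (2 * t) - 1)) (2 * G / (G - 1)) ξ :=
    ((((hasDerivAt_id' ξ).const_mul 2).exp).sub_const 1).log (by linarith) |>.congr_deriv
      (by ring)
  have hm : HasDerivAt (fun t => Real.log (1 - rexp (-2 * t))) (2 * Q / (1 - Q)) ξ :=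
    ((((hasDerivAt_id' ξ).const_mul (-2)).exp).const_sub 1).log (by linarith) |>.congr_deriv
      (by ring)
  have hcoeff : halfLineCoeff μ ξ =
      μ / 2 * ((2 * G / (G - 1) : ℝ) : ℂ) - 3 / 2 * ((2 * Q / (1 - Q) : ℝ) : ℂ) := by
    have hG' : (G : ℂ) - 1 ≠ 0 := by exact_mod_cast (by linarith : G - 1 ≠ 0)
    have hQ' : (1 : ℂ) - Q ≠ 0 := by exact_mod_cast (by linarith : 1 - Q ≠ 0)
    change (μ - 3 * (Q : ℂ)) / (1 - Q) = _
    push_cast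
    field_simp
    linear_combination μ * hGQ
  rw [hcoeff, mul_comm]
  exact ((hℓ.ofReal_comp.const_mul (μ / 2)).sub (hm.ofReal_comp.const_mul (3 / 2))).cexp

theorem norm_sq_halfLineSolution (μ : ℂ) (ξ : ℝ) :
    ‖halfLineSolution μ ξ‖ ^ 2 =
      rexp (μ.re * Real.log (rexp (2 * ξ) - 1) - 3 * Real.log (1 - rexp (-2 * ξ))) := by
  rw [halfLineSolution, Complex.norm_exp, ← Real.exp_nat_mul]
  congr 1
  simp only [Complex.sub_re, Complex.mul_re, Complex.div_re, Complex.ofReal_re, Complex.ofReal_im]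
  norm_num
  ring

theorem one_le_norm_sq_halfLineSolution {μ : ℂ} (hμ : 0 ≤ μ.re) {ξ : ℝ} (hξ : 1 ≤ ξ) :
    1 ≤ ‖halfLineSolution μ ξ‖ ^ 2 := by
  have hg : 1 ≤ rexp (2 * ξ) - 1 := by linarith [add_one_le_exp (2 * ξ)]
  have hq : 0 < 1 - rexp (-2 * ξ) := by linarith [exp_lt_one_iff.2 (by linarith : -2 * ξ < 0)]
  have hℓ : 0 ≤ Real.log (rexp (2 * ξ) - 1) := Real.log_nonneg hg
  have hm : Real.log (1 - rexp (-2 * ξ)) ≤ 0 :=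
    Real.log_nonpos hq.le (by linarith [exp_pos (-2 * ξ)])
  rw [norm_sq_halfLineSolution, Real.one_le_exp_iff]
  nlinarith

theorem inv_le_norm_sq_halfLineSolution {μ : ℂ} (hμ : μ.re ≤ 0) {ξ : ℝ} (hξ : 0 < ξ)
    (hξ' : ξ < Real.log 2 / 2) : (2 * ξ)⁻¹ ≤ ‖halfLineSolution μ ξ‖ ^ 2 := by
  have hg₀ : 0 < rexp (2 * ξ) - 1 := by linarith [one_lt_exp_iff.2 (by linarith : 0 < 2 * ξ)]
  have hg : rexp (2 * ξ) - 1 ≤ 1 := by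
    linarith [exp_log two_pos ▸ exp_le_exp.2 (by linarith : 2 * ξ ≤ Real.log 2)]
  have hq : 0 < 1 - rexp (-2 * ξ) := by linarith [exp_lt_one_iff.2 (by linarith : -2 * ξ < 0)]
  have hq' : 1 - rexp (-2 * ξ) ≤ 2 * ξ := by linarith [add_one_le_exp (-2 * ξ)]
  have hℓ : Real.log (rexp (2 * ξ) - 1) ≤ 0 := Real.log_nonpos hg₀.le hg
  have hm : Real.log (1 - rexp (-2 * ξ)) ≤ 0 :=
    Real.log_nonpos hq.le (by linarith [exp_pos (-2 * ξ)])
  calc (2 * ξ)⁻¹ ≤ (1 - rexp (-2 * ξ))⁻¹ := inv_anti₀ hq hq'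
    _ = rexp (-Real.log (1 - rexp (-2 * ξ))) := by rw [exp_neg, exp_log hq]
    _ ≤ ‖halfLineSolution μ ξ‖ ^ 2 := by
      rw [norm_sq_halfLineSolution]
      exact exp_le_exp.2 (by nlinarith)

theorem not_integrableOn_norm_sq_halfLineSolution (μ : ℂ) :
    ¬ IntegrableOn (fun ξ => ‖halfLineSolution μ ξ‖ ^ 2) (Ioi 0) := by
  intro hint
  rcases le_total 0 μ.re with hμ | hμ
  · exact not_integrableOn_Ioi_of_const_le one_pos
      (fun ξ hξ => one_le_norm_sq_halfLineSolution hμ (le_of_lt hξ))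
      (hint.mono_set (Ioi_subset_Ioi zero_le_one))
  · refine not_integrableOn_Ioo_of_const_mul_inv_le (a := Real.log 2 / 2)
      (div_pos (Real.log_pos one_lt_two) two_pos) (inv_pos.2 two_pos)
      (fun ξ hξ => ?_) (hint.mono_set Ioo_subset_Ioi_self)
    rw [← mul_inv]
    exact inv_le_norm_sq_halfLineSolution hμ hξ.1 hξ.2

theorem eq_zero_of_hasDerivAt_halfLineCoeff_mul {μ : ℂ} {w : ℝ → ℂ}
    (hw : ∀ ξ > 0, HasDerivAt w (halfLineCoeff μ ξ * w ξ) ξ)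
    (hL2 : MemLp w 2 (volume.restrict (Ioi 0))) {ξ : ℝ} (hξ : 0 < ξ) : w ξ = 0 := by
  obtain ⟨C, hC⟩ := exists_eq_const_mul_of_hasDerivAt isOpen_Ioi isPreconnected_Ioi hw
    (fun _ hξ => hasDerivAt_halfLineSolution μ hξ) (fun _ _ => Complex.exp_ne_zero _)
  suffices C = 0 by rw [hC ξ hξ, this, zero_mul]
  by_contra hC0
  have hint : IntegrableOn (fun ξ => ‖w ξ‖ ^ 2) (Ioi 0) := hL2.integrable_norm_pow two_ne_zero
  refine not_integrableOn_norm_sq_halfLineSolution μ <|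
    IntegrableOn.congr_fun (hint.const_mul (‖C‖ ^ 2)⁻¹) (fun ξ hξ => ?_) measurableSet_Ioi
  rw [hC ξ hξ, norm_mul, mul_pow, inv_mul_cancel_left₀ (pow_ne_zero 2 (norm_ne_zero_iff.2 hC0))]

theorem phi_sq (ξ : ℝ) : phi ξ ^ 2 = rexp (-2 * |ξ|) := by
  rw [phi, ← exp_nat_mul]; ring_nf

theorem phi_mul_phi' (ξ : ℝ) : phi ξ * phi' ξ = -Real.sign ξ * rexp (-2 * |ξ|) := by
  rw [phi', ← phi, ← mul_assoc, mul_comm (phi ξ), mul_assoc, ← sq, phi_sq]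

theorem halfLineCoeff_mul_eq {μ d w : ℂ} {ξ : ℝ} (hξ : 0 < ξ)
    (h : (1 - rexp (-2 * ξ)) * d = (μ - 3 * rexp (-2 * ξ)) * w) : halfLineCoeff μ ξ * w = d := by
  have hq : (1 : ℂ) - rexp (-2 * ξ) ≠ 0 := by
    rw [sub_ne_zero]
    exact_mod_cast (exp_lt_one_iff.2 (by linarith : -2 * ξ < 0)).ne'
  rw [halfLineCoeff, div_mul_eq_mul_div, div_eq_iff hq, ← h, mul_comm]

theorem halfLineCoeff_mul_eq_of_adjointEq_pos {lam d w : ℂ} {ξ : ℝ} (hξ : 0 < ξ)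
    (h : -(((1 - phi ξ ^ 2 : ℝ) : ℂ) * d) + 3 * ((phi ξ * phi' ξ : ℝ) : ℂ) * w = lam * w) :
    halfLineCoeff (-lam) ξ * w = d := by
  rw [phi_sq, phi_mul_phi', abs_of_pos hξ, Real.sign_of_pos hξ] at h
  push_cast [-Complex.ofReal_exp] at h
  exact halfLineCoeff_mul_eq hξ (by linear_combination -h)

theorem halfLineCoeff_mul_eq_of_adjointEq_neg {lam d w : ℂ} {ξ : ℝ} (hξ : 0 < ξ)
    (h : -(((1 - phi (-ξ) ^ 2 : ℝ) : ℂ) * d) + 3 * ((phi (-ξ) * phi' (-ξ) : ℝ) : ℂ) * w = lam * w) :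
    halfLineCoeff lam ξ * w = -d := by
  rw [phi_sq, phi_mul_phi', abs_neg, abs_of_pos hξ, Real.sign_of_neg (neg_neg_of_pos hξ)] at h
  push_cast [-Complex.ofReal_exp] at h
  exact halfLineCoeff_mul_eq hξ (by linear_combination h)

theorem adjoint_no_point_spectrum_general
    (lam : ℂ) (v dv : ℝ → ℂ)
    (hderiv : ∀ ξ : ℝ, ξ ≠ 0 → HasDerivAt v (dv ξ) ξ)
    (heq : ∀ ξ : ℝ, ξ ≠ 0 →
      -(((1 - phi ξ ^ 2 : ℝ) : ℂ) * dv ξ) + 3 * ((phi ξ * phi' ξ : ℝ) : ℂ) * v ξ = lam * v ξ)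
    (hv : MeasureTheory.MemLp v 2 (volume : Measure ℝ)) :
    ∀ ξ : ℝ, ξ ≠ 0 → v ξ = 0 := by
  intro ξ hξ
  rcases hξ.lt_or_gt with hneg | hpos
  · have hw : ∀ t > 0, HasDerivAt (fun t => v (-t)) (halfLineCoeff lam t * v (-t)) t :=
      fun t ht => by
        rw [halfLineCoeff_mul_eq_of_adjointEq_neg ht (heq (-t) (by linarith))]
        simpa [Function.comp_def] using (hderiv (-t) (by linarith)).scomp t (hasDerivAt_neg t)
    have hL2 : MemLp (fun t => v (-t)) 2 (volume.restrict (Ioi 0)) :=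
      (hv.comp_measurePreserving (Measure.measurePreserving_neg volume)).restrict _
    simpa using eq_zero_of_hasDerivAt_halfLineCoeff_mul hw hL2 (neg_pos.2 hneg)
  · refine eq_zero_of_hasDerivAt_halfLineCoeff_mul (μ := -lam) (fun t ht => ?_) (hv.restrict _) hpos
    rw [halfLineCoeff_mul_eq_of_adjointEq_pos ht (heq t ht.ne')]
    exact hderiv t ht.ne'

/-- For `Re λ > 0`, the adjoint eigenvalue problem `-(1-φ²)v' + 3φφ'v = λ v` has no nonzero
solution in `L²(ℝ)`. -/
theorem adjoint_no_point_spectrum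
    (lam : ℂ) (hlam : 0 < lam.re) (v dv : ℝ → ℂ)
    (hderiv : ∀ ξ : ℝ, ξ ≠ 0 → HasDerivAt v (dv ξ) ξ)
    (heq : ∀ ξ : ℝ, ξ ≠ 0 →
      -(((1 - phi ξ ^ 2 : ℝ) : ℂ) * dv ξ) + 3 * ((phi ξ * phi' ξ : ℝ) : ℂ) * v ξ = lam * v ξ)
    (hv : MeasureTheory.MemLp v 2 (volume : Measure ℝ)) :
    ∀ ξ : ℝ, ξ ≠ 0 → v ξ = 0 :=
  adjoint_no_point_spectrum_general lam v dv hderiv heq hv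
end
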